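/- Consider the temperature recursion T_AT(t) = T_AT(t-1) + π₃₁·(F(t) - π₃₂·T_AT(t-1) - π₃₃·(T_AT(t-1) - T_LO(t-1))) and T_LO(t) = T_LO(t-1) + π₃₄·(T_AT(t-1) - T_LO(t-1)), with π₃₁, π₃₃, π₃₄ > 0 and π₃₁·(π₃₂ + π₃₃) < 1 and π₃₄ < 1. If the forcing sequence is increased pointwise, F'(t) ≥ F(t) for all t (same initial conditions), then T'_AT(t) ≥ T_AT(t) and T'_LO(t) ≥ T_LO(t) for all t. -/
import Mathlib


/-- Monotonicity of the DICE two-box climate model with respect to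
radiative forcing: under the stated coefficient conditions, pointwise larger
forcing yields pointwise larger atmospheric and deep-ocean temperatures. -/
theorem two_box_climate_monotone_in_forcing
    (pi31 pi32 pi33 pi34 : ℝ)
    (h31 : 0 < pi31) (h33 : 0 < pi33) (h34 : 0 < pi34)
    (hstab : pi31 * (pi32 + pi33) < 1) (h34' : pi34 < 1)
    (F F' : ℕ → ℝ) (TAT TLO TAT' TLO' : ℕ → ℝ)
    (hF : ∀ t, F t ≤ F' t)
    (hinitAT : TAT' 0 = TAT 0) (hinitLO : TLO' 0 = TLO 0)
    (hTAT : ∀ t : ℕ, 1 ≤ t →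
      TAT t = TAT (t - 1) + pi31 * (F t - pi32 * TAT (t - 1) -
        pi33 * (TAT (t - 1) - TLO (t - 1))))
    (hTLO : ∀ t : ℕ, 1 ≤ t →
      TLO t = TLO (t - 1) + pi34 * (TAT (t - 1) - TLO (t - 1)))
    (hTAT' : ∀ t : ℕ, 1 ≤ t →
      TAT' t = TAT' (t - 1) + pi31 * (F' t - pi32 * TAT' (t - 1) -
        pi33 * (TAT' (t - 1) - TLO' (t - 1))))
    (hTLO' : ∀ t : ℕ, 1 ≤ t →
      TLO' t = TLO' (t - 1) + pi34 * (TAT' (t - 1) - TLO' (t - 1))) :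
    ∀ t, TAT t ≤ TAT' t ∧ TLO t ≤ TLO' t := by
  intro t
  induction t with
  | zero => exact ⟨hinitAT.ge, hinitLO.ge⟩
  | succ n ih =>
    obtain ⟨ihAT, ihLO⟩ := ih
    have h1 : (1 : ℕ) ≤ n + 1 := Nat.le_add_left 1 n
    have e1 := hTAT (n + 1) h1
    have e2 := hTLO (n + 1) h1
    have e3 := hTAT' (n + 1) h1
    have e4 := hTLO' (n + 1) h1
    simp only [Nat.add_sub_cancel] at e1 e2 e3 e4
    have hFn := hF (n + 1)
    constructor
    · rw [e1, e3]
      nlinarith [mul_nonneg (mul_nonneg h31.le h33.le) (sub_nonneg.2 ihLO),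
        mul_nonneg (sub_nonneg.2 (le_of_lt hstab)) (sub_nonneg.2 ihAT),
        mul_nonneg h31.le (sub_nonneg.2 hFn)]
    · rw [e2, e4]
      nlinarith [mul_nonneg h34.le (sub_nonneg.2 ihAT),
        mul_nonneg (sub_nonneg.2 (le_of_lt h34')) (sub_nonneg.2 ihLO)]
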